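/- arXiv:1709.00607 — 2 statements merged into one kernel-verified Lean document; each statement's English description precedes it below -/
import Mathlib

section
/- Suppose m ≡ 2 (mod 4) and m + 1 ≡ 0 (mod 3). Let j* be the n-tuple with j*_(n−1) = (m+1)/3 and all other entries 0. Then j* ∈ J, P(j*) ≠ 0, and for every j ∈ J with j ≠ j*, either P(j) = 0 or V(j) < V(j*). -/
open Finset

/-- `s a` is the sum of the binary digits of `a`. -/
def sdig (a : ℕ) : ℕ := (Nat.digits 2 a).sum

/-- `carries a b` is the number of carries when adding `a` and `b` in base 2:
`c(a,b) = s(a) + s(b) - s(a+b)`. -/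
def carries (a b : ℕ) : ℕ := sdig a + sdig b - sdig (a + b)

/-- The generalized binomial coefficient `C_r(x) = x(x-1)⋯(x-r+1)/r!` (with `C_0(x) = 1`). -/
def genBinom (x : ℚ) (r : ℕ) : ℚ :=
  (∏ p ∈ Finset.range r, (x - p)) / (Nat.factorial r : ℚ)

/-- Membership in the index set `J`: here `j i` (for `i : Fin n`) is the paper's
`j_{i+1}`, so the defining relation `(2^n-1)j_1 + ⋯ + (2-1)j_n = m+1` becomes
`∑ k, (2^(n-k) - 1) * j k = m + 1`. -/
def inJ (n m : ℕ) (j : Fin n → ℕ) : Prop :=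
  ∑ k : Fin n, (2 ^ (n - (k : ℕ)) - 1) * j k = m + 1

/-- `α_j(k)`: for `K : Fin n`, `alphaF n m j K` is the paper's `α_j(K+1)`, i.e.
`m / 2^(n-K) - ∑_{I < K} 2^(K-I) j_{I+1}`. -/
def alphaF (n m : ℕ) (j : Fin n → ℕ) (K : Fin n) : ℚ :=
  (m : ℚ) / 2 ^ (n - (K : ℕ)) -
    ∑ I : Fin n, if (I : ℕ) < (K : ℕ) then 2 ^ ((K : ℕ) - (I : ℕ)) * (j I : ℚ) else 0

/-- `P(j) = ∏_{k=1}^n C_{j_k}(α_j(k))`. -/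
def Pprod (n m : ℕ) (j : Fin n → ℕ) : ℚ :=
  ∏ k : Fin n, genBinom (alphaF n m j k) (j k)

/-- `V(j) = -ν(P(j))`, where `ν` is the 2-adic valuation on `ℚ`. -/
def V (n m : ℕ) (j : Fin n → ℕ) : ℤ := - padicValRat 2 (Pprod n m j)

/-!
Let `s` be the binary digit sum `sdig` and `e = n - k + 1` the exponent attached to the index `k`.
For `k < n`, `α_j(k)` is `m / 2^e` minus an integer, so, as `m ≡ 2 (mod 4)`, every factor
`α_j(k) - p` of `C_{j_k}(α_j(k))` has 2-adic valuation `1 - e`, and Legendre's formula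
`ν(r!) = r - s(r)` gives `-ν(C_{j_k}(α_j(k))) = e j_k - s(j_k)`. The last factor is a binomial
coefficient of an integer, hence an integer. So `V(j) ≤ Σ_{k<n} (e j_k - s(j_k))`, with equality
for `j*`, where the sum is `2r - s(r)` with `r = (m + 1)/3`.

For `j ∈ J` put `q = r - j_{n-1}`, so that `Σ_{e ≥ 3} (2^e - 1) j_k ≤ 3q`. By subadditivity of `s`
it suffices to show `Σ_{e ≥ 3} e j_k + s(q) < 2q`. This follows from `7e ≤ 3(2^e - 1)` and
`2 s(q) ≤ q + 1` once `q ≥ 3`, and for smaller `q` all `j_k` with `e ≥ 3` vanish. Finally `q = 0`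
forces `j = j*`.
-/

section Padic

variable {p : ℕ}

lemma ne_zero_of_padicValRat_neg {x : ℚ} (hx : padicValRat p x < 0) : x ≠ 0 := by
  rintro rfl; simp at hx

variable [Fact p.Prime]

lemma padicValRat_finset_prod {ι : Type*} (s : Finset ι) (f : ι → ℚ) (h : ∀ i ∈ s, f i ≠ 0) :
    padicValRat p (∏ i ∈ s, f i) = ∑ i ∈ s, padicValRat p (f i) := by
  induction s using Finset.cons_induction with
  | empty => simp
  | cons i s hi IH =>
    rw [prod_cons, sum_cons,
      padicValRat.mul (h i (mem_cons_self i s))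
        (prod_ne_zero_iff.mpr fun j hj => h j (mem_cons_of_mem hj)),
      IH fun j hj => h j (mem_cons_of_mem hj)]

lemma padicValRat_sub_intCast_of_neg {x : ℚ} (hx : padicValRat p x < 0) (c : ℤ) :
    padicValRat p (x - c) = padicValRat p x := by
  rcases eq_or_ne c 0 with rfl | hc
  · simp
  have hcval : 0 ≤ padicValRat p (-c : ℤ) := by
    rw [padicValRat.of_int]; exact Int.natCast_nonneg _
  have hx0 : x ≠ 0 := ne_zero_of_padicValRat_neg hx
  have hxc : x + (-c : ℤ) ≠ 0 := by
    intro h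
    rw [show x = (c : ℤ) by push_cast at h ⊢; linarith, padicValRat.of_int] at hx
    omega
  rw [sub_eq_add_neg, ← Int.cast_neg,
    padicValRat.add_eq_of_lt hxc hx0 (by exact_mod_cast neg_ne_zero.mpr hc) (by omega)]

lemma padicValRat_genBinom_of_neg {x : ℚ} (hx : padicValRat p x < 0) (r : ℕ) :
    genBinom x r ≠ 0 ∧
      padicValRat p (genBinom x r) = r * padicValRat p x - padicValNat p r.factorial := by
  have hval (i : ℕ) : padicValRat p (x - i) = padicValRat p x := by
    exact_mod_cast padicValRat_sub_intCast_of_neg hx i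
  have hfac : (r.factorial : ℚ) ≠ 0 := by positivity
  have hprod : ∏ i ∈ range r, (x - i) ≠ 0 :=
    prod_ne_zero_iff.mpr fun i _ => ne_zero_of_padicValRat_neg ((hval i).trans_lt hx)
  refine ⟨div_ne_zero hprod hfac, ?_⟩
  rw [genBinom, padicValRat.div hprod hfac, padicValRat_finset_prod _ _ fun i _ =>
    ne_zero_of_padicValRat_neg ((hval i).trans_lt hx), padicValRat.of_nat]
  simp [hval]

end Padic

lemma genBinom_intCast (z : ℤ) (r : ℕ) : genBinom z r = (Ring.choose z r : ℤ) := by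
  have h := Ring.descPochhammer_eq_factorial_smul_choose z r
  rw [← Polynomial.eval_eq_smeval, nsmul_eq_mul] at h
  rw [genBinom, ← descPochhammer_eval_eq_prod_range, ← descPochhammer_eval_cast, h]
  push_cast
  field_simp

lemma sdig_le (a : ℕ) : sdig a ≤ a := Nat.digit_sum_le 2 a

lemma padicValNat_two_factorial (a : ℕ) : padicValNat 2 a.factorial = a - sdig a := by
  simpa [sdig] using sub_one_mul_padicValNat_factorial (p := 2) a

lemma sdig_add_le (a b : ℕ) : sdig (a + b) ≤ sdig a + sdig b := by
  have h := Nat.factorial_mul_factorial_dvd_factorial_add a b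
  have hval := (padicValNat_dvd_iff_le (p := 2) (Nat.factorial_ne_zero _)).mp
    ((pow_padicValNat_dvd (p := 2) (n := a.factorial * b.factorial)).trans h)
  rw [padicValNat.mul (Nat.factorial_ne_zero _) (Nat.factorial_ne_zero _),
    padicValNat_two_factorial, padicValNat_two_factorial, padicValNat_two_factorial] at hval
  have := sdig_le a; have := sdig_le b; have := sdig_le (a + b)
  omega

lemma sdig_eq_mod_add_sdig_div (a : ℕ) : sdig a = a % 2 + sdig (a / 2) := by
  rcases Nat.eq_zero_or_pos a with rfl | ha
  · simp [sdig]
  · simp [sdig, Nat.digits_def' one_lt_two ha]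

lemma two_mul_sdig_le (a : ℕ) : 2 * sdig a ≤ a + 1 := by
  induction a using Nat.strong_induction_on with
  | _ a ih =>
    rcases Nat.eq_zero_or_pos a with rfl | ha
    · simp [sdig]
    have := ih (a / 2) (by omega)
    have := sdig_le (a / 2)
    rw [sdig_eq_mod_add_sdig_div]
    omega

lemma seven_mul_le_three_mul_two_pow_sub_one {t : ℕ} (ht : 3 ≤ t) : 7 * t ≤ 3 * (2 ^ t - 1) := by
  induction t, ht using Nat.le_induction with
  | base => norm_num
  | succ t ht ih =>
    have : 8 ≤ 2 ^ t := by
      calc 8 = 2 ^ 3 := by norm_num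
      _ ≤ 2 ^ t := Nat.pow_le_pow_right two_pos ht
    rw [pow_succ]; omega

lemma sum_mul_add_sdig_lt {ι : Type*} (s : Finset ι) (e a : ι → ℕ) (he : ∀ i ∈ s, 3 ≤ e i)
    {q : ℕ} (hq : 1 ≤ q) (hW : ∑ i ∈ s, (2 ^ e i - 1) * a i ≤ 3 * q) :
    ∑ i ∈ s, e i * a i + sdig q < 2 * q := by
  have hsdig := two_mul_sdig_le q
  rcases Nat.eq_zero_or_pos (∑ i ∈ s, e i * a i) with hT | hT
  · have := sdig_le q
    omega
  obtain ⟨i, hi, hai⟩ := exists_ne_zero_of_sum_ne_zero hT.ne'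
  have hq3 : 7 ≤ 3 * q := by
    have h7 : 7 ≤ 2 ^ e i - 1 := by
      have := Nat.pow_le_pow_right two_pos (he i hi)
      omega
    calc 7 ≤ (2 ^ e i - 1) * a i :=
          h7.trans (Nat.le_mul_of_pos_right _ (Nat.pos_of_ne_zero (right_ne_zero_of_mul hai)))
      _ ≤ ∑ i ∈ s, (2 ^ e i - 1) * a i :=
          single_le_sum (f := fun i => (2 ^ e i - 1) * a i) (fun _ _ => Nat.zero_le _) hi
      _ ≤ 3 * q := hW
  have hT7 : 7 * ∑ i ∈ s, e i * a i ≤ 9 * q := by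
    calc 7 * ∑ i ∈ s, e i * a i = ∑ i ∈ s, 7 * e i * a i := by rw [mul_sum]; simp [mul_assoc]
      _ ≤ ∑ i ∈ s, 3 * (2 ^ e i - 1) * a i := sum_le_sum fun i hi =>
          Nat.mul_le_mul_right _ (seven_mul_le_three_mul_two_pow_sub_one (he i hi))
      _ = 3 * ∑ i ∈ s, (2 ^ e i - 1) * a i := by rw [mul_sum]; simp [mul_assoc]
      _ ≤ 9 * q := by omega
  omega

lemma alphaF_eq_sub_natCast (n m : ℕ) (j : Fin n → ℕ) (K : Fin n) :
    ∃ c : ℕ, alphaF n m j K = (m : ℚ) / 2 ^ (n - (K : ℕ)) - c :=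
  ⟨∑ I : Fin n, if (I : ℕ) < (K : ℕ) then 2 ^ ((K : ℕ) - (I : ℕ)) * j I else 0, by
    simp [alphaF]⟩

lemma padicValRat_div_two_pow_of_mod_four_eq_two {m : ℕ} (hm : m % 4 = 2) (e : ℕ) :
    padicValRat 2 ((m : ℚ) / 2 ^ e) = 1 - e := by
  have hm2 : m = 2 * (m / 2) := by omega
  have hodd : ¬ 2 ∣ m / 2 := by omega
  rw [padicValRat.div (by exact_mod_cast (show m ≠ 0 by omega)) (by positivity),
    padicValRat.pow, padicValRat.of_nat, hm2,
    padicValNat.mul two_ne_zero (by omega), padicValNat.eq_zero_of_not_dvd hodd]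
  simp [show padicValRat 2 (2 : ℚ) = 1 by exact_mod_cast padicValRat.self (p := 2) one_lt_two]

section Factors

variable {n m : ℕ} (j : Fin (n + 1) → ℕ)

lemma padicValRat_genBinom_alphaF_castSucc (hm : m % 4 = 2) (K : Fin n) :
    genBinom (alphaF (n + 1) m j K.castSucc) (j K.castSucc) ≠ 0 ∧
      padicValRat 2 (genBinom (alphaF (n + 1) m j K.castSucc) (j K.castSucc)) =
        sdig (j K.castSucc) - ((n + 1 - K : ℕ) : ℤ) * j K.castSucc := by
  obtain ⟨c, hc⟩ := alphaF_eq_sub_natCast (n + 1) m j K.castSucc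
  have hα : padicValRat 2 (alphaF (n + 1) m j K.castSucc) = 1 - (n + 1 - K : ℕ) := by
    rw [hc, ← Int.cast_natCast c, padicValRat_sub_intCast_of_neg] <;>
    rw [padicValRat_div_two_pow_of_mod_four_eq_two hm, Fin.val_castSucc]
    omega
  obtain ⟨hne, hval⟩ := padicValRat_genBinom_of_neg (hα.trans_lt (by omega)) (j K.castSucc)
  refine ⟨hne, ?_⟩
  rw [hval, hα, padicValNat_two_factorial, Nat.cast_sub (sdig_le _)]
  ring

lemma exists_intCast_genBinom_alphaF_last (hm : m % 2 = 0) :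
    ∃ z : ℤ, genBinom (alphaF (n + 1) m j (Fin.last n)) (j (Fin.last n)) = z := by
  obtain ⟨c, hc⟩ := alphaF_eq_sub_natCast (n + 1) m j (Fin.last n)
  have hα : alphaF (n + 1) m j (Fin.last n) = ((m / 2 - c : ℤ) : ℚ) := by
    rw [hc, Fin.val_last, Nat.add_sub_cancel_left, pow_one]
    push_cast
    rw [Int.cast_div (by omega) (by norm_num)]
    push_cast; ring
  exact ⟨_, by rw [hα, genBinom_intCast]⟩

/-- `V` without the contribution of the last factor, see `V_eq_Vhead_sub`. -/
def Vhead (n : ℕ) (j : Fin (n + 1) → ℕ) : ℤ :=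
  ∑ K : Fin n, (((n + 1 - K : ℕ) : ℤ) * j K.castSucc - sdig (j K.castSucc))

lemma V_eq_Vhead_sub (hm : m % 4 = 2) (hP : Pprod (n + 1) m j ≠ 0) :
    V (n + 1) m j = Vhead n j -
      padicValRat 2 (genBinom (alphaF (n + 1) m j (Fin.last n)) (j (Fin.last n))) := by
  have hne := prod_ne_zero_iff.mp hP
  rw [V, Pprod, padicValRat_finset_prod _ _ hne, Fin.sum_univ_castSucc, Vhead]
  simp only [fun K => (padicValRat_genBinom_alphaF_castSucc j hm K).2]
  simp only [sum_sub_distrib]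
  ring

lemma V_le_Vhead (hm : m % 4 = 2) (hP : Pprod (n + 1) m j ≠ 0) : V (n + 1) m j ≤ Vhead n j := by
  obtain ⟨z, hz⟩ := exists_intCast_genBinom_alphaF_last j (m := m) (by omega)
  rw [V_eq_Vhead_sub j hm hP, hz, padicValRat.of_int]
  omega

lemma Pprod_ne_zero_of_last_eq_zero (hm : m % 4 = 2) (hlast : j (Fin.last n) = 0) :
    Pprod (n + 1) m j ≠ 0 := by
  rw [Pprod, Fin.prod_univ_castSucc, hlast, genBinom, prod_range_zero]
  simpa using prod_ne_zero_iff.mpr fun K _ => (padicValRat_genBinom_alphaF_castSucc j hm K).1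

lemma V_eq_Vhead_of_last_eq_zero (hm : m % 4 = 2) (hlast : j (Fin.last n) = 0) :
    V (n + 1) m j = Vhead n j := by
  rw [V_eq_Vhead_sub j hm (Pprod_ne_zero_of_last_eq_zero j hm hlast), hlast]
  simp [genBinom]

end Factors

section Extremal

/- Here `n = k + 2`, and `(Fin.last k).castSucc : Fin (k + 2)` is the paper's index `n - 1`,
the support of `j*`. -/

variable {k m r : ℕ}

lemma inJ_iff_sum_castSucc (j : Fin (k + 2) → ℕ) :
    inJ (k + 2) m j ↔ ∑ i : Fin k, (2 ^ (k + 2 - i) - 1) * j i.castSucc.castSucc +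
      3 * j (Fin.last k).castSucc + j (Fin.last (k + 1)) = m + 1 := by
  simp [inJ, Fin.sum_univ_castSucc]

lemma Vhead_eq_sum_castSucc (j : Fin (k + 2) → ℕ) :
    Vhead (k + 1) j =
      ∑ i : Fin k, (((k + 2 - i : ℕ) : ℤ) * j i.castSucc.castSucc - sdig (j i.castSucc.castSucc)) +
        (2 * j (Fin.last k).castSucc - sdig (j (Fin.last k).castSucc)) := by
  rw [Vhead, Fin.sum_univ_castSucc]
  simp only [Fin.val_castSucc, Fin.val_last, show k + 1 + 1 - k = 2 by omega]
  push_cast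
  rfl

lemma Vhead_single : Vhead (k + 1) (Pi.single (Fin.last k).castSucc r) = 2 * r - sdig r := by
  rw [Vhead_eq_sum_castSucc]
  simp [(Fin.castSucc_lt_castSucc_iff.mpr (Fin.castSucc_lt_last _)).ne, sdig]

lemma inJ_single (hr : m + 1 = 3 * r) : inJ (k + 2) m (Pi.single (Fin.last k).castSucc r) := by
  rw [inJ_iff_sum_castSucc]
  simp [(Fin.castSucc_lt_castSucc_iff.mpr (Fin.castSucc_lt_last _)).ne, hr]

lemma eq_single_of_sum_castSucc_eq_zero {j : Fin (k + 2) → ℕ}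
    (hhigh : ∑ i : Fin k, (2 ^ (k + 2 - i) - 1) * j i.castSucc.castSucc = 0)
    (hD : j (Fin.last k).castSucc = r) (hlast : j (Fin.last (k + 1)) = 0) :
    j = Pi.single (Fin.last k).castSucc r := by
  have hne : (Fin.last k).castSucc ≠ Fin.last (k + 1) := (Fin.castSucc_lt_last _).ne
  funext K
  induction K using Fin.lastCases with
  | last => simp [hlast, hne.symm]
  | cast K =>
    induction K using Fin.lastCases with
    | last => simp [hD]
    | cast i =>
      have hi := (sum_eq_zero_iff.mp hhigh) i (mem_univ i)
      have hpos : 0 < 2 ^ (k + 2 - i) - 1 := by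
        have := Nat.one_lt_two_pow (n := k + 2 - i) (by omega)
        omega
      simp [(Nat.mul_eq_zero.mp hi).resolve_left hpos.ne',
        (Fin.castSucc_lt_castSucc_iff.mpr (Fin.castSucc_lt_last i)).ne]

lemma Vhead_lt_of_ne_single {j : Fin (k + 2) → ℕ} (hr : m + 1 = 3 * r) (hj : inJ (k + 2) m j)
    (hne : j ≠ Pi.single (Fin.last k).castSucc r) : Vhead (k + 1) j < 2 * r - sdig r := by
  rw [inJ_iff_sum_castSucc] at hj
  obtain ⟨b, hb⟩ : ∃ b, j (Fin.last k).castSucc = b := ⟨_, rfl⟩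
  have hVhead : Vhead (k + 1) j ≤
      ((∑ i : Fin k, (k + 2 - (i : ℕ)) * j i.castSucc.castSucc : ℕ) : ℤ) + (2 * b - sdig b) := by
    rw [Vhead_eq_sum_castSucc, hb]
    push_cast
    gcongr with i
    simp
  obtain ⟨q, rfl⟩ : ∃ q, r = b + q := ⟨r - b, by omega⟩
  rcases Nat.eq_zero_or_pos q with rfl | hq
  · exact absurd (eq_single_of_sum_castSucc_eq_zero (by omega) (by omega) (by omega)) hne
  have hkey : ∑ i : Fin k, (k + 2 - (i : ℕ)) * j i.castSucc.castSucc + sdig q < 2 * q :=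
    sum_mul_add_sdig_lt univ (fun i : Fin k => k + 2 - (i : ℕ)) _ (fun i _ => by omega) hq
      (by omega)
  have hsub := sdig_add_le b q
  omega

end Extremal

theorem stmt10_general (n m : ℕ) (hn : 3 ≤ n)
    (h4 : m % 4 = 2) (h3 : (m + 1) % 3 = 0)
    (jst : Fin n → ℕ)
    (hjst : jst = fun k : Fin n => if (k : ℕ) = n - 2 then (m + 1) / 3 else 0) :
    inJ n m jst ∧ Pprod n m jst ≠ 0 ∧
      ∀ j : Fin n → ℕ, inJ n m j → j ≠ jst →
        Pprod n m j = 0 ∨ V n m j < V n m jst := by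
  obtain ⟨k, rfl⟩ : ∃ k, n = k + 2 := ⟨n - 2, by omega⟩
  obtain ⟨r, hr⟩ : ∃ r, m + 1 = 3 * r := ⟨(m + 1) / 3, by omega⟩
  have hjst_single : jst = Pi.single (Fin.last k).castSucc r := by
    funext K
    simp [hjst, Pi.single_apply, Fin.ext_iff, hr]
  have hlast : jst (Fin.last (k + 1)) = 0 := by
    simp [hjst_single, (Fin.castSucc_lt_last _).ne']
  subst hjst_single
  refine ⟨inJ_single hr, Pprod_ne_zero_of_last_eq_zero _ h4 hlast, fun j hj hne => ?_⟩
  refine or_iff_not_imp_left.mpr fun hP => ?_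
  calc V (k + 2) m j ≤ Vhead (k + 1) j := V_le_Vhead j h4 hP
    _ < 2 * r - sdig r := Vhead_lt_of_ne_single hr hj hne
    _ = V (k + 2) m _ := by rw [V_eq_Vhead_of_last_eq_zero _ h4 hlast, Vhead_single]

/-- If `m ≡ 2 mod 4` and `m + 1 ≡ 0 mod 3`, then the tuple
`j* = (0, …, 0, (m+1)/3, 0)` lies in `J`, `P(j*) ≠ 0`, and every other `j ∈ J`
has `P(j) = 0` or `V(j) < V(j*)`. -/
theorem stmt10 (n m : ℕ) (hn : 3 ≤ n) (hm : 1 ≤ m) (hmn : m ≤ 2 ^ (n + 1) - 3)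
    (h4 : m % 4 = 2) (h3 : (m + 1) % 3 = 0)
    (jst : Fin n → ℕ)
    (hjst : jst = fun k : Fin n => if (k : ℕ) = n - 2 then (m + 1) / 3 else 0) :
    inJ n m jst ∧ Pprod n m jst ≠ 0 ∧
      ∀ j : Fin n → ℕ, inJ n m j → j ≠ jst →
        Pprod n m j = 0 ∨ V n m j < V n m jst :=
  stmt10_general n m hn h4 h3 jst hjst
end

section
/- Suppose m ≡ 2 (mod 8) and m + 1 ≡ 2 (mod 3), and set p = (m−1)/3. Let j* be the n-tuple with j*_(n−1) = p, j*_n = 2, and all other entries 0. Then j* ∈ J, P(j*) ≠ 0, and V(j*) = 2p − s(p) = (2p+1) − s(2p+1). -/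
open Finset

lemma padicValRat_prod {ι : Type*} (s : Finset ι) (f : ι → ℚ)
    (h : ∀ i ∈ s, f i ≠ 0) :
    padicValRat 2 (∏ i ∈ s, f i) = ∑ i ∈ s, padicValRat 2 (f i) := by
  classical
  induction s using Finset.induction_on with
  | empty => simp
  | @insert a s ha ih =>
    rw [Finset.prod_insert ha, Finset.sum_insert ha,
      padicValRat.mul (h _ (mem_insert_self _ _))
        (Finset.prod_ne_zero_iff.mpr fun i hi => h i (mem_insert_of_mem hi)),
      ih fun i hi => h i (mem_insert_of_mem hi)]

lemma genBinom_zero (x : ℚ) : genBinom x 0 = 1 := by simp [genBinom]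

/-- If `m ≡ 2 mod 8`, `m + 1 ≡ 2 mod 3` and `p = (m-1)/3`, then the tuple
`j* = (0, …, 0, p, 2)` lies in `J`, `P(j*) ≠ 0`, and
`V(j*) = 2p - s(p) = (2p+1) - s(2p+1)`. -/
theorem stmt18 (n m : ℕ) (hn : 3 ≤ n) (hm : 1 ≤ m) (hmn : m ≤ 2 ^ (n + 1) - 3)
    (h8 : m % 8 = 2) (h3 : (m + 1) % 3 = 2)
    (p : ℕ) (hp : p = (m - 1) / 3)
    (jst : Fin n → ℕ)
    (hjst : jst = fun k : Fin n =>
      if (k : ℕ) = n - 2 then p else if (k : ℕ) = n - 1 then 2 else 0) :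
    inJ n m jst ∧ Pprod n m jst ≠ 0 ∧
      V n m jst = (2 * p : ℤ) - sdig p ∧
      (2 * p : ℤ) - sdig p = (2 * p + 1 : ℤ) - sdig (2 * p + 1) := by
  have hm3 : m = 3 * p + 1 := by omega
  obtain ⟨t, ht⟩ : ∃ t, m = 8 * t + 2 := ⟨m / 8, by omega⟩
  obtain ⟨sP, hs⟩ : ∃ sP, p = 8 * sP + 3 := ⟨p / 8, by omega⟩
  set i0 : Fin n := ⟨n - 2, by omega⟩ with hi0
  set i1 : Fin n := ⟨n - 1, by omega⟩ with hi1
  have hne : i0 ≠ i1 := by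
    simp only [hi0, hi1, Fin.mk.injEq, ne_eq]
    omega
  have hv0 : (i0 : ℕ) = n - 2 := rfl
  have hv1 : (i1 : ℕ) = n - 1 := rfl
  have hj0 : jst i0 = p := by rw [hjst]; simp [hv0]
  have hj1 : jst i1 = 2 := by
    rw [hjst]; simp only [hv1]
    rw [if_neg (by omega)]; simp
  have hjz : ∀ k : Fin n, (k : ℕ) ≠ n - 2 → (k : ℕ) ≠ n - 1 → jst k = 0 := by
    intro k h1 h2; rw [hjst]; simp [h1, h2]
  -- inJ
  have hinJ : inJ n m jst := by
    unfold inJ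
    have key : ∀ k : Fin n, (2 ^ (n - (k : ℕ)) - 1) * jst k
        = (if k = i0 then 3 * p else 0) + (if k = i1 then 2 else 0) := by
      intro k
      by_cases h0 : k = i0
      · subst h0
        rw [if_pos rfl, if_neg hne, hj0, hv0]
        have h2 : n - (n - 2) = 2 := by omega
        rw [h2]; norm_num
      · by_cases h1 : k = i1
        · subst h1
          rw [if_neg h0, if_pos rfl, hj1, hv1]
          have h2 : n - (n - 1) = 1 := by omega
          rw [h2]; norm_num
        · rw [if_neg h0, if_neg h1,
            hjz k (fun hc => h0 (Fin.ext (by rw [hc, ← hv0]))) (fun hc => h1 (Fin.ext (by rw [hc, ← hv1])))]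
          simp
    rw [Finset.sum_congr rfl (fun k _ => key k), Finset.sum_add_distrib,
      Finset.sum_ite_eq' univ i0, Finset.sum_ite_eq' univ i1]
    simp only [mem_univ, if_true]
    omega
  -- alpha values
  have hA : alphaF n m jst i0 = (m : ℚ) / 4 := by
    unfold alphaF
    rw [hv0]
    have h2 : n - (n - 2) = 2 := by omega
    rw [h2]
    have hz : (∑ I : Fin n, if (I : ℕ) < n - 2 then
        (2 : ℚ) ^ ((n - 2) - (I : ℕ)) * (jst I : ℚ) else 0) = 0 := by
      apply Finset.sum_eq_zero
      intro I _
      by_cases hI : (I : ℕ) < n - 2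
      · rw [if_pos hI, hjz I (by omega) (by omega), Nat.cast_zero, mul_zero]
      · rw [if_neg hI]
    rw [hz]; norm_num
  have hB : alphaF n m jst i1 = (m : ℚ) / 2 - 2 * p := by
    unfold alphaF
    rw [hv1]
    have h2 : n - (n - 1) = 1 := by omega
    rw [h2]
    have hz : (∑ I : Fin n, if (I : ℕ) < n - 1 then
        (2 : ℚ) ^ ((n - 1) - (I : ℕ)) * (jst I : ℚ) else 0) = 2 * p := by
      have key : ∀ I : Fin n, (if (I : ℕ) < n - 1 then
          (2 : ℚ) ^ ((n - 1) - (I : ℕ)) * (jst I : ℚ) else 0)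
          = if I = i0 then 2 * (p : ℚ) else 0 := by
        intro I
        by_cases h0 : I = i0
        · subst h0
          rw [if_pos rfl, if_pos (by rw [hv0]; omega), hj0, hv0]
          have : (n - 1) - (n - 2) = 1 := by omega
          rw [this]; ring
        · rw [if_neg h0]
          by_cases hI : (I : ℕ) < n - 1
          · rw [if_pos hI, hjz I (fun hc => h0 (Fin.ext (by rw [hc, ← hv0]))) (by omega),
              Nat.cast_zero, mul_zero]
          · rw [if_neg hI]
      rw [Finset.sum_congr rfl (fun I _ => key I), Finset.sum_ite_eq' univ i0]
      simp
    rw [hz]; norm_num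
  -- Pprod decomposition
  have hprod : Pprod n m jst = genBinom ((m : ℚ) / 4) p * genBinom ((m : ℚ) / 2 - 2 * p) 2 := by
    unfold Pprod
    have key : ∀ k : Fin n, genBinom (alphaF n m jst k) (jst k)
        = (if k = i0 then genBinom ((m : ℚ) / 4) p else 1) *
          (if k = i1 then genBinom ((m : ℚ) / 2 - 2 * p) 2 else 1) := by
      intro k
      by_cases h0 : k = i0
      · subst h0
        rw [if_pos rfl, if_neg hne, mul_one, hj0, hA]
      · by_cases h1 : k = i1
        · subst h1
          rw [if_neg h0, if_pos rfl, one_mul, hj1, hB]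
        · rw [if_neg h0, if_neg h1, mul_one,
            hjz k (fun hc => h0 (Fin.ext (by rw [hc, ← hv0]))) (fun hc => h1 (Fin.ext (by rw [hc, ← hv1]))),
            genBinom_zero]
    rw [Finset.prod_congr rfl (fun k _ => key k), Finset.prod_mul_distrib,
      Finset.prod_ite_eq' univ i0, Finset.prod_ite_eq' univ i1]
    simp
  -- B is an odd positive integer
  have hmq : (m : ℚ) = 24 * sP + 10 := by rw [hm3, hs]; push_cast; ring
  have hpq : (p : ℚ) = 8 * sP + 3 := by rw [hs]; push_cast; ring
  have hBval : genBinom ((m : ℚ) / 2 - 2 * p) 2 = (((4 * sP + 1) * (2 * sP + 1) : ℕ) : ℚ) := by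
    unfold genBinom
    rw [Finset.prod_range_succ, Finset.prod_range_one]
    rw [hmq, hpq]
    push_cast
    norm_num [Nat.factorial]
    ring
  have hBodd : ¬ 2 ∣ (4 * sP + 1) * (2 * sP + 1) := by
    rw [Nat.prime_two.dvd_mul]
    push_neg
    omega
  have hBne : genBinom ((m : ℚ) / 2 - 2 * p) 2 ≠ 0 := by
    rw [hBval]
    exact Nat.cast_ne_zero.mpr (by positivity)
  have hBv : padicValRat 2 (genBinom ((m : ℚ) / 2 - 2 * p) 2) = 0 := by
    rw [hBval, padicValRat.of_nat, padicValNat.eq_zero_of_not_dvd hBodd]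
    rfl
  -- factors of A
  have hfac : ∀ i : ℕ, i < p → (m : ℚ) / 4 - i = ((2 * ((2 * t : ℤ) - i) + 1 : ℤ) : ℚ) / 2 := by
    intro i hi
    have : (m : ℚ) = 8 * t + 2 := by rw [ht]; push_cast; ring
    rw [this]
    push_cast
    ring
  have hfacne : ∀ i ∈ Finset.range p, (m : ℚ) / 4 - (i : ℚ) ≠ 0 := by
    intro i hi
    rw [hfac i (Finset.mem_range.mp hi)]
    have hz : (2 * ((2 * t : ℤ) - i) + 1 : ℤ) ≠ 0 := by omega
    positivity
  have hfacv : ∀ i ∈ Finset.range p, padicValRat 2 ((m : ℚ) / 4 - (i : ℚ)) = -1 := by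
    intro i hi
    rw [hfac i (Finset.mem_range.mp hi)]
    have hz : (2 * ((2 * t : ℤ) - i) + 1 : ℤ) ≠ 0 := by omega
    rw [padicValRat.div (by exact_mod_cast hz) (by norm_num),
      padicValRat.of_int, padicValInt.eq_zero_of_not_dvd (by omega)]
    have h2 : padicValRat 2 (2 : ℚ) = 1 := by
      have := padicValRat.self (p := 2) (by norm_num)
      simpa using this
    rw [h2]
    rfl
  have hnumne : (∏ i ∈ Finset.range p, ((m : ℚ) / 4 - i)) ≠ 0 :=
    Finset.prod_ne_zero_iff.mpr hfacne
  have hfactne : ((Nat.factorial p : ℕ) : ℚ) ≠ 0 := by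
    exact_mod_cast (Nat.factorial_pos p).ne'
  have hAne : genBinom ((m : ℚ) / 4) p ≠ 0 := by
    unfold genBinom
    exact div_ne_zero hnumne hfactne
  have hsle : sdig p ≤ p := Nat.digit_sum_le 2 p
  have hfactv : padicValNat 2 (Nat.factorial p) = p - sdig p := by
    have := sub_one_mul_padicValNat_factorial (p := 2) p
    simpa [sdig] using this
  have hAv : padicValRat 2 (genBinom ((m : ℚ) / 4) p) = -(2 * p : ℤ) + sdig p := by
    unfold genBinom
    rw [padicValRat.div hnumne hfactne, padicValRat_prod _ _ hfacne,
      Finset.sum_congr rfl hfacv, padicValRat.of_nat, hfactv]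
    simp only [Finset.sum_const, Finset.card_range, smul_eq_mul]
    push_cast [hsle]
    ring
  refine ⟨hinJ, ?_, ?_, ?_⟩
  · rw [hprod]; exact mul_ne_zero hAne hBne
  · unfold V
    rw [hprod, padicValRat.mul hAne hBne, hAv, hBv]
    ring
  · have hdg : Nat.digits 2 (2 * p + 1) = 1 :: Nat.digits 2 p := by
      rw [Nat.digits_def' (by norm_num : 1 < 2) (by omega)]
      have h1 : (2 * p + 1) % 2 = 1 := by omega
      have h2 : (2 * p + 1) / 2 = p := by omega
      rw [h1, h2]
    have : sdig (2 * p + 1) = 1 + sdig p := by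
      unfold sdig; rw [hdg, List.sum_cons]
    rw [this]
    push_cast
    ring
end
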